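/- arXiv:alg-geom/9506007 — 4 statements merged into one kernel-verified Lean document; each statement's English description precedes it below -/
import Mathlib

section
/- Let N ≥ 1, let β : {1,…,N} → ℤ take only nonzero values, let r : {1,…,N} → ℕ take only positive values, let μ ∈ ℤ, and set n_+ = Σ_{j : β_j > 0} r_j β_j. If μ + n_+ > 0, then for every ε with 0 < ε < 1, ∮_{|t|=ε} t^{μ−1} · ∏_{j=1}^N (1 − t^{−β_j})^{−r_j} dt = 0. -/
/-!
After pulling `t^{β_j}` out of every factor with `β_j > 0`, each factor
`(1 - t^{-β_j})^{-1}` becomes `(t^{β_j} - 1)^{-1}` or `(1 - t^{|β_j|})^{-1}`, which is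
holomorphic on the unit disc because `t^k ≠ 1` there. On the circle the integrand is therefore
`t^{μ - 1 + n₊}` times a function holomorphic on the disc, and `μ - 1 + n₊ ≥ 0` makes the whole
integrand holomorphic, so Cauchy's theorem kills the integral.
-/

open Metric Set Finset

theorem zpow_sum₀ {G ι : Type*} [CommGroupWithZero G] {a : G} (ha : a ≠ 0) (s : Finset ι)
    (f : ι → ℤ) : a ^ (∑ i ∈ s, f i) = ∏ i ∈ s, a ^ f i := by
  classical
  induction s using Finset.induction with
  | empty => simp
  | insert i s hi ih => rw [sum_insert hi, prod_insert hi, zpow_add₀ ha, ih]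

theorem pow_ne_one_of_norm_lt_one {R : Type*} [SeminormedRing R] [NormOneClass R] {t : R}
    (ht : ‖t‖ < 1) {k : ℕ} (hk : k ≠ 0) : t ^ k ≠ 1 := by
  intro h
  have hle := norm_pow_le' t (Nat.pos_of_ne_zero hk)
  rw [h, norm_one] at hle
  exact (pow_lt_one₀ (norm_nonneg t) ht hk).not_ge hle

noncomputable def regularPart (b : ℤ) (t : ℂ) : ℂ :=
  if 0 < b then (t ^ b.natAbs - 1)⁻¹ else (1 - t ^ b.natAbs)⁻¹

theorem differentiableOn_regularPart {b : ℤ} (hb : b ≠ 0) :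
    DifferentiableOn ℂ (regularPart b) (ball 0 1) := by
  intro t ht
  have hpow : t ^ b.natAbs ≠ 1 :=
    pow_ne_one_of_norm_lt_one (mem_ball_zero_iff.mp ht) (Int.natAbs_ne_zero.mpr hb)
  by_cases hpos : 0 < b
  · have hfun : regularPart b = fun t => (t ^ b.natAbs - 1)⁻¹ := funext fun _ => if_pos hpos
    rw [hfun]
    exact DifferentiableAt.differentiableWithinAt
      (by fun_prop (disch := exact sub_ne_zero.mpr hpow))
  · have hfun : regularPart b = fun t => (1 - t ^ b.natAbs)⁻¹ := funext fun _ => if_neg hpos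
    rw [hfun]
    exact DifferentiableAt.differentiableWithinAt
      (by fun_prop (disch := exact sub_ne_zero.mpr hpow.symm))

theorem inv_one_sub_zpow_neg_eq (b : ℤ) {t : ℂ} (ht : t ≠ 0) :
    (1 - t ^ (-b))⁻¹ = t ^ max b 0 * regularPart b t := by
  unfold regularPart
  split_ifs with hb
  · obtain ⟨n, rfl⟩ := Int.eq_ofNat_of_zero_le hb.le
    have hn : t ^ n ≠ 0 := pow_ne_zero n ht
    have hsub : 1 - (t ^ n)⁻¹ = (t ^ n - 1) * (t ^ n)⁻¹ := by field_simp
    simp only [zpow_neg, zpow_natCast, max_eq_left hb.le, Int.natAbs_natCast]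
    rw [hsub, mul_inv, inv_inv, mul_comm]
  · obtain ⟨n, rfl⟩ := Int.exists_eq_neg_ofNat (not_lt.mp hb)
    simp

theorem prod_inv_one_sub_zpow_neg_pow_eq {ι : Type*} (s : Finset ι) (β : ι → ℤ) (r : ι → ℕ)
    {t : ℂ} (ht : t ≠ 0) :
    ∏ j ∈ s, ((1 - t ^ (-β j))⁻¹) ^ r j =
      t ^ (∑ j ∈ s with 0 < β j, (r j : ℤ) * β j) * ∏ j ∈ s, regularPart (β j) t ^ r j := by
  have hsum : ∑ j ∈ s with 0 < β j, (r j : ℤ) * β j = ∑ j ∈ s, (r j : ℤ) * max (β j) 0 := by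
    rw [sum_filter]
    refine sum_congr rfl fun j _ => ?_
    split_ifs with hj
    · rw [max_eq_left hj.le]
    · rw [max_eq_right (not_lt.mp hj), mul_zero]
  simp only [inv_one_sub_zpow_neg_eq _ ht, mul_pow, prod_mul_distrib, hsum, zpow_sum₀ ht,
    zpow_mul', zpow_natCast]

theorem circleIntegral_zpow_mul_eq_zero {g : ℂ → ℂ} {R ε : ℝ}
    (hg : DifferentiableOn ℂ g (ball 0 R)) (hε : 0 ≤ ε) (hεR : ε < R) {k : ℤ} (hk : 0 ≤ k) :
    (∮ t in C(0, ε), t ^ k * g t) = 0 := by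
  lift k to ℕ using hk
  simp only [zpow_natCast]
  exact ((differentiableOn_pow k).mul hg).diffContOnCl_ball
    (closedBall_subset_ball hεR) |>.circleIntegral_eq_zero hε

theorem stmt5_general (N : ℕ) (β : Fin N → ℤ) (hβ : ∀ j, β j ≠ 0)
    (r : Fin N → ℕ) (μ : ℤ)
    (h : 0 < μ + ∑ j ∈ Finset.univ.filter (fun j => 0 < β j), (r j : ℤ) * β j) :
    ∀ ε : ℝ, 0 < ε → ε < 1 →
      (∮ t in C(0, ε), t ^ (μ - 1) * ∏ j, ((1 - t ^ (-β j))⁻¹) ^ (r j)) = 0 := by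
  intro ε hε hε1
  set nPos := ∑ j ∈ Finset.univ.filter (fun j => 0 < β j), (r j : ℤ) * β j
  have hEq : EqOn (fun t : ℂ => t ^ (μ - 1) * ∏ j, ((1 - t ^ (-β j))⁻¹) ^ (r j))
      (fun t => t ^ (μ - 1 + nPos) * ∏ j, regularPart (β j) t ^ r j) (sphere 0 ε) := by
    intro t ht
    have ht0 : t ≠ 0 := norm_ne_zero_iff.mp (by rw [mem_sphere_zero_iff_norm.mp ht]; exact hε.ne')
    simp only [prod_inv_one_sub_zpow_neg_pow_eq _ _ _ ht0, zpow_add₀ ht0, mul_assoc, nPos]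
  rw [circleIntegral.integral_congr hε.le hEq]
  have hreg : DifferentiableOn ℂ (fun t => ∏ j, regularPart (β j) t ^ r j) (ball 0 1) :=
    DifferentiableOn.fun_finsetProd fun j _ => (differentiableOn_regularPart (hβ j)).pow _
  exact circleIntegral_zpow_mul_eq_zero hreg hε.le hε1 (by omega)

/-- With nonzero integer weights `β j`, positive multiplicities `r j`,
`μ ∈ ℤ` and `n₊ = ∑_{j : β j > 0} r j * β j`, if `μ + n₊ > 0` then for every `0 < ε < 1`
the circle integral `∮_{|t|=ε} t^(μ-1) ∏ j (1 - t^(-β j))^(-r j) dt` vanishes. -/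
theorem stmt5 (N : ℕ) (hN : 1 ≤ N) (β : Fin N → ℤ) (hβ : ∀ j, β j ≠ 0)
    (r : Fin N → ℕ) (hr : ∀ j, 0 < r j) (μ : ℤ)
    (h : 0 < μ + ∑ j ∈ Finset.univ.filter (fun j => 0 < β j), (r j : ℤ) * β j) :
    ∀ ε : ℝ, 0 < ε → ε < 1 →
      (∮ t in C(0, ε), t ^ (μ - 1) * ∏ j, ((1 - t ^ (-β j))⁻¹) ^ (r j)) = 0 :=
  stmt5_general N β hβ r μ h
end

section
/- Let N ≥ 1, let β : {1,…,N} → ℤ take only nonzero values, let r : {1,…,N} → ℕ take only positive values, let μ ∈ ℤ, and set n_− = Σ_{j : β_j < 0} r_j (−β_j). If μ < n_−, then for every R > 1, ∮_{|t|=R} t^{μ−1} · ∏_{j=1}^N (1 − t^{−β_j})^{−r_j} dt = 0. -/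
/-!
The integrand `f` is holomorphic on `‖t‖ > 1`, so by Cauchy's theorem on annuli its integral over
`|t| = R` does not depend on `R > 1`; over `|t| = S` it is at most `2π sup ‖t f(t)‖`. For `‖t‖ ≥ 2`
every factor obeys `‖(1 - t^(-β))⁻¹‖ ≤ 2 ‖t‖^(min β 0)`, hence `‖t f(t)‖ = O(‖t‖^(μ - n₋))`, which
tends to `0` because `μ < n₋`.
-/

open Finset Filter Bornology Topology

section Factors

variable {𝕜 : Type*}

theorem one_sub_zpow_ne_zero [NormedDivisionRing 𝕜] {z : 𝕜} (hz : 1 < ‖z‖) {b : ℤ} (hb : b ≠ 0) :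
    1 - z ^ b ≠ 0 := by
  intro h
  have hnorm : ‖z‖ ^ b = ‖z‖ ^ (0 : ℤ) := by
    rw [← norm_zpow, ← sub_eq_zero.mp h, norm_one, zpow_zero]
  exact hb (zpow_right_injective₀ (one_pos.trans hz) hz.ne' hnorm)

theorem norm_inv_one_sub_le_of_two_le_norm [NormedDivisionRing 𝕜] {w : 𝕜} (hw : 2 ≤ ‖w‖) :
    ‖(1 - w)⁻¹‖ ≤ 2 * ‖w‖⁻¹ := by
  have hlow : ‖w‖ / 2 ≤ ‖1 - w‖ := by
    have := norm_sub_norm_le w 1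
    rw [norm_one, norm_sub_rev] at this
    linarith
  rw [norm_inv]
  exact (inv_anti₀ (by linarith) hlow).trans_eq (by rw [inv_div, div_eq_mul_inv])

theorem norm_inv_one_sub_le_of_norm_le_half [NormedDivisionRing 𝕜] {w : 𝕜} (hw : ‖w‖ ≤ 1 / 2) :
    ‖(1 - w)⁻¹‖ ≤ 2 := by
  have hlow : 1 / 2 ≤ ‖1 - w‖ := by
    have := norm_sub_norm_le 1 w
    rw [norm_one] at this
    linarith
  rw [norm_inv]
  exact (inv_anti₀ (by norm_num) hlow).trans_eq (by norm_num)

theorem norm_inv_one_sub_zpow_neg_le [NormedDivisionRing 𝕜] {z : 𝕜} (hz : 2 ≤ ‖z‖) {b : ℤ}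
    (hb : b ≠ 0) : ‖(1 - z ^ (-b))⁻¹‖ ≤ 2 * ‖z‖ ^ min b 0 := by
  have hz1 : 1 ≤ ‖z‖ := by linarith
  rcases hb.lt_or_gt with hneg | hpos
  · have hzb : ‖z‖ ≤ ‖z ^ (-b)‖ := by
      simpa [norm_zpow] using zpow_le_zpow_right₀ hz1 (show (1 : ℤ) ≤ -b by omega)
    rw [min_eq_left hneg.le, ← inv_inv (‖z‖ ^ b), ← zpow_neg, ← norm_zpow]
    exact norm_inv_one_sub_le_of_two_le_norm (hz.trans hzb)
  · have hzb : ‖z ^ (-b)‖ ≤ ‖z‖⁻¹ := by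
      simpa [norm_zpow] using zpow_le_zpow_right₀ hz1 (show -b ≤ -1 by omega)
    rw [min_eq_right hpos.le, zpow_zero, mul_one]
    refine norm_inv_one_sub_le_of_norm_le_half (hzb.trans ?_)
    rw [inv_le_comm₀ (by linarith) (by norm_num)]
    linarith

theorem norm_prod_inv_one_sub_zpow_neg_le [NormedField 𝕜] {ι : Type*} (s : Finset ι)
    (β : ι → ℤ) (hβ : ∀ j, β j ≠ 0) (r : ι → ℕ) {z : 𝕜} (hz : 2 ≤ ‖z‖) :
    ‖∏ j ∈ s, ((1 - z ^ (-β j))⁻¹) ^ r j‖ ≤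
      2 ^ (∑ j ∈ s, r j) * ‖z‖ ^ (∑ j ∈ s, (r j : ℤ) * min (β j) 0) := by
  classical
  have hz0 : ‖z‖ ≠ 0 := by positivity
  induction s using Finset.cons_induction with
  | empty => simp
  | cons a s ha ih =>
    rw [prod_cons, sum_cons, sum_cons, norm_mul, norm_pow, pow_add, zpow_add₀ hz0, zpow_mul',
      zpow_natCast, mul_mul_mul_comm, ← mul_pow]
    exact mul_le_mul (pow_le_pow_left₀ (norm_nonneg _) (norm_inv_one_sub_zpow_neg_le hz (hβ a)) _)
      ih (norm_nonneg _) (by positivity)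

theorem differentiableAt_zpow_mul_prod_inv_one_sub_zpow_neg [NontriviallyNormedField 𝕜]
    {ι : Type*} (s : Finset ι) (β : ι → ℤ) (hβ : ∀ j, β j ≠ 0) (r : ι → ℕ) (m : ℤ) {z : 𝕜}
    (hz : 1 < ‖z‖) :
    DifferentiableAt 𝕜 (fun t => t ^ m * ∏ j ∈ s, ((1 - t ^ (-β j))⁻¹) ^ r j) z := by
  have hz0 : z ≠ 0 := norm_pos_iff.1 (one_pos.trans hz)
  refine (differentiableAt_zpow.2 (.inl hz0)).mul (.fun_finsetProd fun j _ => ?_)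
  exact (((differentiableAt_const 1).sub (differentiableAt_zpow.2 (.inl hz0))).inv
    (one_sub_zpow_ne_zero hz (neg_ne_zero.2 (hβ j)))).pow _

theorem tendsto_zpow_mul_prod_inv_one_sub_zpow_neg [NormedField 𝕜] {ι : Type*} (s : Finset ι)
    (β : ι → ℤ) (hβ : ∀ j, β j ≠ 0) (r : ι → ℕ) {m : ℤ}
    (hm : m + ∑ j ∈ s, (r j : ℤ) * min (β j) 0 < 0) :
    Tendsto (fun z : 𝕜 => z ^ m * ∏ j ∈ s, ((1 - z ^ (-β j))⁻¹) ^ r j) (cobounded 𝕜) (𝓝 0) := by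
  refine squeeze_zero_norm' ?_ (by simpa using ((tendsto_zpow_atTop_zero hm).comp
    tendsto_norm_cobounded_atTop).const_mul (2 ^ ∑ j ∈ s, r j : ℝ))
  filter_upwards [eventually_cobounded_le_norm 2] with z hz
  rw [norm_mul, norm_zpow, zpow_add₀ (by positivity), mul_left_comm]
  exact mul_le_mul_of_nonneg_left (norm_prod_inv_one_sub_zpow_neg_le s β hβ r hz) (by positivity)

end Factors

theorem sum_mul_min_zero_eq_neg_sum_filter {ι : Type*} (s : Finset ι) (β : ι → ℤ) (r : ι → ℕ) :
    ∑ j ∈ s, (r j : ℤ) * min (β j) 0 = -∑ j ∈ s.filter (fun j => β j < 0), (r j : ℤ) * (-β j) := by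
  rw [sum_filter, ← sum_neg_distrib]
  refine sum_congr rfl fun j _ => ?_
  split_ifs with hj
  · rw [min_eq_left hj.le]; ring
  · rw [min_eq_right (not_lt.1 hj)]; simp

section CircleIntegral

variable {E : Type*} [NormedAddCommGroup E] [NormedSpace ℂ E]

theorem norm_circleIntegral_le_of_norm_smul_le {f : ℂ → E} {S C : ℝ} (hS : 0 < S)
    (hf : ∀ z ∈ Metric.sphere (0 : ℂ) S, ‖z • f z‖ ≤ C) :
    ‖∮ z in C(0, S), f z‖ ≤ 2 * Real.pi * C := by
  have hbound : ∀ z ∈ Metric.sphere (0 : ℂ) S, ‖f z‖ ≤ C / S := by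
    intro z hz
    rw [mem_sphere_zero_iff_norm] at hz
    rw [le_div_iff₀ hS, mul_comm, ← hz, ← norm_smul]
    exact hf z (mem_sphere_zero_iff_norm.2 hz)
  calc ‖∮ z in C(0, S), f z‖ ≤ 2 * Real.pi * S * (C / S) :=
        circleIntegral.norm_integral_le_of_norm_le_const hS.le hbound
    _ = 2 * Real.pi * C := by field_simp

theorem circleIntegral_eq_zero_of_tendsto_smul_cobounded {f : ℂ → E} {R : ℝ} (hR : 0 < R)
    (hd : ∀ z : ℂ, R ≤ ‖z‖ → DifferentiableAt ℂ f z)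
    (hf : Tendsto (fun z => z • f z) (cobounded ℂ) (𝓝 0)) :
    ∮ z in C(0, R), f z = 0 := by
  have hradius : ∀ S, R ≤ S → ∮ z in C(0, S), f z = ∮ z in C(0, R), f z := by
    intro S hS
    refine Complex.circleIntegral_eq_of_differentiable_on_annulus_off_countable hR hS
      Set.countable_empty (fun z hz => (hd z ?_).continuousAt.continuousWithinAt)
      (fun z hz => hd z ?_)
    · simpa using hz.2
    · have := hz.1.2
      simp only [Metric.mem_closedBall, dist_zero_right, not_le] at this
      exact this.le
  refine norm_le_zero_iff.1 (le_of_forall_gt_imp_ge_of_dense fun ε hε => ?_)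
  have hsmall : ∀ᶠ z in cobounded ℂ, ‖z • f z‖ ≤ ε / (2 * Real.pi) :=
    (tendsto_norm_zero.comp hf).eventually (ge_mem_nhds (by positivity))
  rw [← comap_norm_atTop, eventually_comap, eventually_atTop] at hsmall
  obtain ⟨A, hA⟩ := hsmall
  have hS : 0 < max R A := hR.trans_le (le_max_left _ _)
  rw [← hradius _ (le_max_left R A)]
  calc ‖∮ z in C(0, max R A), f z‖ ≤ 2 * Real.pi * (ε / (2 * Real.pi)) :=
        norm_circleIntegral_le_of_norm_smul_le hS fun z hz =>
          hA _ (le_max_right R A |>.trans (mem_sphere_zero_iff_norm.1 hz).ge) z rfl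
    _ = ε := by field_simp

end CircleIntegral

theorem stmt6_general (N : ℕ) (β : Fin N → ℤ) (hβ : ∀ j, β j ≠ 0)
    (r : Fin N → ℕ) (μ : ℤ)
    (h : μ < ∑ j ∈ Finset.univ.filter (fun j => β j < 0), (r j : ℤ) * (-β j)) :
    ∀ R : ℝ, 1 < R →
      (∮ t in C(0, R), t ^ (μ - 1) * ∏ j, ((1 - t ^ (-β j))⁻¹) ^ (r j)) = 0 := by
  intro R hR
  have hμ : μ + ∑ j, (r j : ℤ) * min (β j) 0 < 0 := by
    rw [sum_mul_min_zero_eq_neg_sum_filter]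
    linarith
  refine circleIntegral_eq_zero_of_tendsto_smul_cobounded (one_pos.trans hR)
    (fun z hz => differentiableAt_zpow_mul_prod_inv_one_sub_zpow_neg _ β hβ r _ (hR.trans_le hz))
    ((tendsto_zpow_mul_prod_inv_one_sub_zpow_neg univ β hβ r hμ).congr' ?_)
  filter_upwards [eventually_ne_cobounded 0] with z hz
  rw [smul_eq_mul, ← mul_assoc, ← zpow_one_add₀ hz, add_sub_cancel]

/-- With nonzero integer weights `β j`, positive multiplicities `r j`,
`μ ∈ ℤ` and `n₋ = ∑_{j : β j < 0} r j * (-β j)`, if `μ < n₋` then for every `R > 1`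
the circle integral `∮_{|t|=R} t^(μ-1) ∏ j (1 - t^(-β j))^(-r j) dt` vanishes. -/
theorem stmt6 (N : ℕ) (hN : 1 ≤ N) (β : Fin N → ℤ) (hβ : ∀ j, β j ≠ 0)
    (r : Fin N → ℕ) (hr : ∀ j, 0 < r j) (μ : ℤ)
    (h : μ < ∑ j ∈ Finset.univ.filter (fun j => β j < 0), (r j : ℤ) * (-β j)) :
    ∀ R : ℝ, 1 < R →
      (∮ t in C(0, R), t ^ (μ - 1) * ∏ j, ((1 - t ^ (-β j))⁻¹) ^ (r j)) = 0 :=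
  stmt6_general N β hβ r μ h
end

section
/- Let φ be a formal power series over ℂ with zero constant coefficient and nonzero coefficient of x, let g be a formal power series over ℂ in the variable u, and let k ≥ 1 be an integer. Regard the substitution g∘φ (substituting φ into g), the formal derivative φ′, and φ itself as elements of the field ℂ((x)) of formal Laurent series, where φ is nonzero of order 1 so that φ^{−k} is defined. Then the coefficient of x^{−1} in (g∘φ) · φ′ · φ^{−k} equals the coefficient of u^{k−1} in g. -/
/-! Write `φ = X ψ` with `ψ` a unit and `w = ψ⁻¹`, so that `φ^(-k) = X^(-k) w^k` and the residue is
the coefficient of `X^(k-1)` in `(g ∘ φ) φ' w^k`. Only the terms of `g` of degree `< k` contribute,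
and for `i < k` the residue of `φ^i φ' φ^(-k)` is `1` if `i = k - 1`, since `φ'/φ = 1/X + ψ'/ψ`,
and `0` otherwise, since then `φ^i φ' φ^(-k) = -(φ^(-m))'/m` with `m = k - 1 - i` is a derivative
and derivatives have no residue. -/

/-- Substitution of a formal power series `φ` with zero constant coefficient into a formal
power series `g` : the coefficient of `x^n` in `g ∘ φ = ∑_k (coeff k g) • φ^k` is
`∑_{k ≤ n} (coeff k g) * coeff n (φ^k)` (the terms with `k > n` do not contribute since
`φ` has zero constant coefficient). -/
noncomputable def substInto (φ g : PowerSeries ℂ) : PowerSeries ℂ :=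
  PowerSeries.mk fun n =>
    ∑ k ∈ Finset.range (n + 1), PowerSeries.coeff k g * PowerSeries.coeff n (φ ^ k)

open PowerSeries LaurentSeries HahnSeries

namespace PowerSeries

variable {R : Type*} [CommRing R]

theorem coeff_pow_mul_derivative [IsAddTorsionFree R] (w : R⟦X⟧) (j : ℕ) :
    coeff j (w ^ j * d⁄dX R w) = coeff (j + 1) (w ^ (j + 1)) := by
  refine nsmul_right_injective (Nat.succ_ne_zero j) ?_
  have h := congrArg (coeff j) (Derivation.leibniz_pow (d⁄dX R) w (j + 1))
  rw [coeff_derivative, Nat.add_sub_cancel, smul_eq_mul, map_nsmul] at h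
  change (j + 1) • _ = (j + 1) • _
  rw [← h, nsmul_eq_mul, Nat.cast_succ, mul_comm]

theorem coeff_derivative_X_mul_mul_pow [IsAddTorsionFree R] {ψ w : R⟦X⟧} (hw : ψ * w = 1)
    (m : ℕ) : coeff m (d⁄dX R (X * ψ) * w ^ (m + 1)) = if m = 0 then 1 else 0 := by
  have hd : d⁄dX R (X * ψ) = ψ + X * d⁄dX R ψ := by
    rw [Derivation.leibniz, derivative_X, smul_eq_mul, smul_eq_mul]
    ring
  rcases m with _ | j
  · have h : d⁄dX R (X * ψ) * w ^ 1 = 1 + X * (d⁄dX R ψ * w) := by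
      rw [hd]; linear_combination hw
    rw [h]
    simp
  · have hdw : ψ * d⁄dX R w + w * d⁄dX R ψ = 0 := by
      simpa [Derivation.leibniz] using congrArg (d⁄dX R) hw
    have h : d⁄dX R (X * ψ) * w ^ (j + 1 + 1) = w ^ (j + 1) - X * (w ^ j * d⁄dX R w) := by
      rw [hd]
      linear_combination (w ^ (j + 1) - X * w ^ j * d⁄dX R w) * hw + X * w ^ (j + 1) * hdw
    rw [h, map_sub, coeff_succ_X_mul, coeff_pow_mul_derivative, sub_self, if_neg j.succ_ne_zero]

theorem coeff_X_mul_pow_mul_derivative_mul_pow [IsAddTorsionFree R] {ψ w : R⟦X⟧}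
    (hw : ψ * w = 1) {i n : ℕ} (hi : i ≤ n) :
    coeff n ((X * ψ) ^ i * d⁄dX R (X * ψ) * w ^ (n + 1)) = if i = n then 1 else 0 := by
  obtain ⟨m, rfl⟩ := Nat.exists_eq_add_of_le hi
  have hpow : ψ ^ i * w ^ i = 1 := by rw [← mul_pow, hw, one_pow]
  have h : (X * ψ) ^ i * d⁄dX R (X * ψ) * w ^ (i + m + 1)
      = X ^ i * (d⁄dX R (X * ψ) * w ^ (m + 1)) := by
    linear_combination (X ^ i * d⁄dX R (X * ψ) * w ^ (m + 1)) * hpow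
  rw [h, add_comm i m, coeff_X_pow_mul, coeff_derivative_X_mul_mul_pow hw]
  simp

end PowerSeries

theorem X_pow_dvd_substInto_sub {φ : ℂ⟦X⟧} (hφ : constantCoeff φ = 0) (g : ℂ⟦X⟧) (n : ℕ) :
    X ^ (n + 1) ∣ substInto φ g - ∑ i ∈ Finset.range (n + 1), coeff i g • φ ^ i := by
  refine X_pow_dvd_iff.mpr fun j hj => ?_
  rw [map_sub, sub_eq_zero, substInto, coeff_mk, map_sum]
  simp only [map_smul, smul_eq_mul]
  refine Finset.sum_subset (Finset.range_subset_range.mpr hj) fun i _ hij => ?_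
  have hφi : X ^ i ∣ φ ^ i := pow_dvd_pow_of_dvd (X_dvd_iff.mpr hφ) i
  rw [X_pow_dvd_iff.mp hφi j (by simpa using hij), mul_zero]

theorem coeff_substInto_mul_derivative_mul_pow {ψ w : ℂ⟦X⟧} (hw : ψ * w = 1) (g : ℂ⟦X⟧)
    (n : ℕ) :
    coeff n (substInto (X * ψ) g * d⁄dX ℂ (X * ψ) * w ^ (n + 1)) = coeff n g := by
  set H := d⁄dX ℂ (X * ψ) * w ^ (n + 1)
  have htrunc := X_pow_dvd_iff.mp
    ((X_pow_dvd_substInto_sub (φ := X * ψ) (by simp) g n).mul_right H) n n.lt_succ_self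
  rw [sub_mul, map_sub, sub_eq_zero, Finset.sum_mul, map_sum] at htrunc
  rw [mul_assoc, htrunc]
  calc _ = ∑ i ∈ Finset.range (n + 1), coeff i g * if i = n then 1 else 0 := by
        refine Finset.sum_congr rfl fun i hi => ?_
        rw [smul_mul_assoc, map_smul, ← mul_assoc,
          coeff_X_mul_pow_mul_derivative_mul_pow hw (Finset.mem_range_succ_iff.mp hi), smul_eq_mul]
    _ = coeff n g := by simp

namespace LaurentSeries

theorem coe_X_mul_zpow_neg {K : Type*} [Field K] {ψ w : K⟦X⟧} (hw : ψ * w = 1) (k : ℕ) :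
    ((X * ψ : K⟦X⟧) : K⸨X⸩) ^ (-(k : ℤ)) = single (-(k : ℤ)) 1 * ((w ^ k : K⟦X⟧) : K⸨X⸩) := by
  rw [zpow_neg, zpow_natCast]
  refine inv_eq_of_mul_eq_one_right ?_
  calc ((X * ψ : K⟦X⟧) : K⸨X⸩) ^ k * (single (-(k : ℤ)) 1 * ((w ^ k : K⟦X⟧) : K⸨X⸩))
      = single (k : ℤ) 1 * single (-(k : ℤ)) 1 * ((ψ : K⸨X⸩) * (w : K⸨X⸩)) ^ k := by
        simp only [map_mul, map_pow, ofPowerSeries_X, single_pow, mul_pow, one_pow, nsmul_one]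
        ring
    _ = 1 := by
      rw [← map_mul, hw, single_mul_single, add_neg_cancel, mul_one, single_zero_one]
      simp

theorem coeff_coe_mul_single_neg {R : Type*} [Semiring R] (f : R⟦X⟧) (n : ℕ) :
    ((f : R⸨X⸩) * single (-((n + 1 : ℕ) : ℤ)) 1).coeff (-1) = coeff n f := by
  rw [show (-1 : ℤ) = n + -((n + 1 : ℕ) : ℤ) by push_cast; ring, coeff_mul_single_add, mul_one,
    coeff_coe_powerSeries]

theorem coeff_coe_mul_X_mul_zpow_neg {K : Type*} [Field K] (f : K⟦X⟧) {ψ w : K⟦X⟧}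
    (hw : ψ * w = 1) (n : ℕ) :
    ((f : K⸨X⸩) * ((X * ψ : K⟦X⟧) : K⸨X⸩) ^ (-((n + 1 : ℕ) : ℤ))).coeff (-1)
      = coeff n (f * w ^ (n + 1)) := by
  rw [coe_X_mul_zpow_neg hw, mul_left_comm, ← map_mul, mul_comm, coeff_coe_mul_single_neg]

end LaurentSeries

/-- (Invariance of the formal residue under change of coordinate.)
If `φ ∈ ℂ⟦x⟧` has zero constant coefficient and nonzero coefficient of `x`, `g ∈ ℂ⟦u⟧`, and
`k ≥ 1`, then, in the field `ℂ((x))` of formal Laurent series, the coefficient of `x^(-1)` in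
`(g ∘ φ) · φ' · φ^(-k)` equals the coefficient of `u^(k-1)` in `g`. -/
theorem stmt9 (φ g : PowerSeries ℂ)
    (hφ0 : PowerSeries.constantCoeff φ = 0)
    (hφ1 : PowerSeries.coeff 1 φ ≠ 0) (k : ℕ) (hk : 1 ≤ k) :
    HahnSeries.coeff
      (((substInto φ g : PowerSeries ℂ) : LaurentSeries ℂ) *
        ((PowerSeries.derivative ℂ φ : PowerSeries ℂ) : LaurentSeries ℂ) *
        ((φ : PowerSeries ℂ) : LaurentSeries ℂ) ^ (-(k : ℤ)))
      (-1) = PowerSeries.coeff (k - 1) g := by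
  obtain ⟨n, rfl⟩ : ∃ n, k = n + 1 := ⟨k - 1, by omega⟩
  obtain ⟨ψ, rfl⟩ := X_dvd_iff.mpr hφ0
  have hψ : constantCoeff ψ ≠ 0 := by simpa [coeff_succ_X_mul] using hφ1
  have hw := PowerSeries.mul_inv_cancel ψ hψ
  rw [← map_mul, coeff_coe_mul_X_mul_zpow_neg _ hw, Nat.add_sub_cancel,
    coeff_substInto_mul_derivative_mul_pow hw]
end

section
/- Let q be a polynomial with complex coefficients, let k ≥ 1 be an integer, and let E ∈ ℂ⟦x⟧ denote the formal power series Σ_{n≥0} (ix)^n / n! (the formal exponential of ix). Regard q(E), E, and (E − 1)^{−k} as elements of the field ℂ((x)) of formal Laurent series, noting that E − 1 is nonzero of order 1. Then the coefficient of x^{−1} in q(E) · i · E · (E − 1)^{−k} equals the coefficient of (X − 1)^{k−1} in the Taylor expansion of q about 1, i.e. q^{(k−1)}(1)/(k−1)!. -/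
/-!
Write `E - 1 = X * u` with `u(0) = i`, so that `i E = (E - 1)'` and `q(E) = p(E - 1)` for the
Taylor expansion `p` of `q` about `1`. The series is then `p(f) f' / f^k` with `f = X * u`, and by
linearity in `p` it suffices to know the residue of `f^j f' / f^k`: it is `1` for `j = k - 1`
(a logarithmic derivative), `0` for `j ≥ k` (no polar part), and `0` for `j < k - 1`, where the
form is exact.
-/

/-- The formal power series `E = ∑_{n ≥ 0} (ix)^n / n!`, the formal exponential of `ix`. -/
noncomputable def expIX : PowerSeries ℂ :=
  PowerSeries.mk fun n => Complex.I ^ n / (n.factorial : ℂ)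

open PowerSeries
open scoped LaurentSeries

namespace PowerSeries

variable {K : Type*} [Field K]

theorem coeff_inv_pow_succ_mul_derivative_X_mul [CharZero K] {u : K⟦X⟧}
    (hu : constantCoeff u ≠ 0) (m : ℕ) :
    coeff m (u⁻¹ ^ (m + 1) * d⁄dX K (X * u)) = if m = 0 then 1 else 0 := by
  have hexpand : u⁻¹ ^ (m + 1) * d⁄dX K (X * u) =
      u⁻¹ ^ m + X * (u⁻¹ ^ (m + 1) * d⁄dX K u) := by
    rw [Derivation.leibniz, derivative_X, smul_eq_mul, smul_eq_mul, pow_succ]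
    linear_combination u⁻¹ ^ m * PowerSeries.inv_mul_cancel u hu
  rw [hexpand, map_add]
  rcases m with _ | n
  · simp
  · -- `u⁻¹ ^ (n + 2) * u'` is, up to the factor `-(n + 1)`, the derivative of `u⁻¹ ^ (n + 1)`,
    -- and the `n`-th coefficient of `g'` is `n + 1` times the `(n + 1)`-st coefficient of `g`.
    have hderiv : d⁄dX K (u⁻¹ ^ (n + 1)) = -((n + 1 : K) • (u⁻¹ ^ (n + 2) * d⁄dX K u)) := by
      rw [Derivation.leibniz_pow, derivative_inv']
      simp only [Nat.add_sub_cancel, nsmul_eq_mul, smul_eq_mul, Algebra.smul_def]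
      push_cast
      ring
    have hcoeff := congrArg (coeff n) hderiv
    rw [coeff_derivative, map_neg, map_smul, smul_eq_mul] at hcoeff
    have hn : (n + 1 : K) ≠ 0 := by exact_mod_cast n.succ_ne_zero
    rw [coeff_succ_X_mul, if_neg n.succ_ne_zero]
    exact mul_left_cancel₀ hn (by linear_combination hcoeff)

theorem coeff_aeval_X_mul_mul_derivative_mul_inv_pow [CharZero K] {u : K⟦X⟧}
    (hu : constantCoeff u ≠ 0) (p : Polynomial K) (k : ℕ) :
    coeff k (Polynomial.aeval (X * u) p * d⁄dX K (X * u) * u⁻¹ ^ (k + 1)) = p.coeff k := by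
  induction p using Polynomial.induction_on' with
  | add p q hp hq => rw [map_add, add_mul, add_mul, map_add, hp, hq, Polynomial.coeff_add]
  | monomial j a =>
    rw [Polynomial.aeval_monomial, Polynomial.coeff_monomial, algebraMap_eq]
    rcases le_or_gt j k with hjk | hkj
    · obtain ⟨m, rfl⟩ := Nat.exists_eq_add_of_le hjk
      have hcancel : u ^ j * u⁻¹ ^ j = 1 := by
        rw [← mul_pow, PowerSeries.mul_inv_cancel u hu, one_pow]
      have hsplit : C a * (X * u) ^ j * d⁄dX K (X * u) * u⁻¹ ^ (j + m + 1) =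
          X ^ j * (C a * (u⁻¹ ^ (m + 1) * d⁄dX K (X * u))) := by
        rw [mul_pow, add_assoc, pow_add]
        linear_combination (X ^ j * C a * u⁻¹ ^ (m + 1) * d⁄dX K (X * u)) * hcancel
      rw [hsplit, add_comm, coeff_X_pow_mul, coeff_C_mul,
        coeff_inv_pow_succ_mul_derivative_X_mul hu]
      simp
    · have hsplit : C a * (X * u) ^ j * d⁄dX K (X * u) * u⁻¹ ^ (k + 1) =
          X ^ j * (C a * u ^ j * d⁄dX K (X * u) * u⁻¹ ^ (k + 1)) := by ring
      rw [hsplit, coeff_X_pow_mul', if_neg hkj.not_ge, if_neg hkj.ne']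

theorem coe_X_mul_zpow_neg {u : K⟦X⟧} (hu : constantCoeff u ≠ 0) (n : ℕ) :
    ((X * u : K⟦X⟧) : K⸨X⸩) ^ (-(n : ℤ)) =
      HahnSeries.single (-(n : ℤ)) 1 * ((u⁻¹ ^ n : K⟦X⟧) : K⸨X⸩) := by
  rw [zpow_neg, zpow_natCast]
  refine inv_eq_of_mul_eq_one_right ?_
  rw [← coe_pow, mul_pow, coe_mul, coe_pow, coe_X, HahnSeries.single_pow, one_pow,
    mul_mul_mul_comm, HahnSeries.single_mul_single, one_mul, ← coe_mul, ← mul_pow,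
    PowerSeries.mul_inv_cancel u hu, one_pow, coe_one, nsmul_one, add_neg_cancel,
    HahnSeries.single_zero_one, mul_one]

theorem coeff_coe_mul_coe_X_mul_zpow_neg_succ {u : K⟦X⟧} (hu : constantCoeff u ≠ 0)
    (g : K⟦X⟧) (k : ℕ) :
    HahnSeries.coeff ((g : K⸨X⸩) * ((X * u : K⟦X⟧) : K⸨X⸩) ^ (-((k + 1 : ℕ) : ℤ))) (-1) =
      coeff k (g * u⁻¹ ^ (k + 1)) := by
  rw [coe_X_mul_zpow_neg hu, mul_left_comm, ← coe_mul,
    show (-1 : ℤ) = k + -((k + 1 : ℕ) : ℤ) by push_cast; ring,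
    HahnSeries.coeff_single_mul_add, one_mul, LaurentSeries.coeff_coe_powerSeries]

end PowerSeries

theorem derivative_expIX : d⁄dX ℂ expIX = Complex.I • expIX := by
  ext n
  simp only [coeff_derivative, expIX, coeff_mk, map_smul, smul_eq_mul, Nat.factorial_succ]
  push_cast
  field_simp
  ring

theorem exists_X_mul_eq_expIX_sub_one :
    ∃ u : ℂ⟦X⟧, constantCoeff u ≠ 0 ∧ X * u = expIX - 1 := by
  obtain ⟨u, hu⟩ : X ∣ expIX - 1 := X_dvd_iff.mpr <| by
    rw [← coeff_zero_eq_constantCoeff_apply]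
    simp [expIX]
  have hu0 : constantCoeff u = Complex.I := by
    rw [← coeff_zero_eq_constantCoeff_apply, ← coeff_succ_X_mul, ← hu]
    simp [expIX]
  exact ⟨u, hu0 ▸ Complex.I_ne_zero, hu.symm⟩

/-- For a polynomial `q` over `ℂ` and `k ≥ 1`, the coefficient of `x^(-1)`
in the formal Laurent series `q(E) · i · E · (E - 1)^(-k)`, where `E = ∑ (ix)^n/n!`, equals
the coefficient of `(X-1)^(k-1)` in the Taylor expansion of `q` about `1`,
i.e. `q^(k-1)(1)/(k-1)!`. -/
theorem stmt10 (q : Polynomial ℂ) (k : ℕ) (hk : 1 ≤ k) :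
    HahnSeries.coeff
      (((Polynomial.aeval expIX q : PowerSeries ℂ) : LaurentSeries ℂ) *
        (Complex.I • ((expIX : PowerSeries ℂ) : LaurentSeries ℂ)) *
        (((expIX : PowerSeries ℂ) : LaurentSeries ℂ) - 1) ^ (-(k : ℤ)))
      (-1) = (Polynomial.taylor 1 q).coeff (k - 1) := by
  obtain ⟨u, hu, hXu⟩ := exists_X_mul_eq_expIX_sub_one
  obtain ⟨k, rfl⟩ := Nat.exists_eq_add_of_le' hk
  have haeval : Polynomial.aeval expIX q = Polynomial.aeval (X * u) (Polynomial.taylor 1 q) := by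
    simp [Polynomial.taylor_apply, Polynomial.aeval_comp, hXu]
  have hderiv : Complex.I • expIX = d⁄dX ℂ (X * u) := by
    rw [hXu, map_sub, Derivation.map_one_eq_zero, sub_zero, derivative_expIX]
  rw [← coe_smul, ← coe_mul, ← coe_one, ← coe_sub, ← hXu,
    coeff_coe_mul_coe_X_mul_zpow_neg_succ hu, haeval, hderiv,
    coeff_aeval_X_mul_mul_derivative_mul_inv_pow hu, Nat.add_sub_cancel]
end
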